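/- Let N be an even positive integer, let m ≥ 1, and let n_1, …, n_m be positive integers with n_1 + ⋯ + n_m ≤ N and with 2·n_k > N for some index k. Then the iterated integral ξ(n_1,…,n_m) = ∫_0^1 dx_1 ∫_0^{x_1} dx_2 ⋯ ∫_0^{x_{m−1}} dx_m ∏_{i=1}^m P_{n_i−1}(x_i) equals 0. Consequently, in the N-th order truncation of the Magnus expansion only the Legendre coefficients A_1, …, A_{N/2} can occur. -/

import Mathlib

/-- Shifted Legendre polynomials on `[0,1]`:
`P 0 x = 1`, `P 1 x = 2x − 1`,
`P (n+1) x = ((2n+1)/(n+1)) (2x−1) P n x − (n/(n+1)) P (n−1) x`. -/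
noncomputable def shiftedLegendre : ℕ → ℝ → ℝ
  | 0 => fun _ => 1
  | 1 => fun x => 2 * x - 1
  | n + 2 => fun x =>
      ((2 * (n + 1) + 1 : ℝ) / (n + 2)) * (2 * x - 1) * shiftedLegendre (n + 1) x -
        ((n + 1 : ℝ) / (n + 2)) * shiftedLegendre n x

/-- The time-ordered iterated integral
`ξ(n₁,…,n_m) = ∫_0^1 dx₁ ∫_0^{x₁} dx₂ ⋯ ∫_0^{x_{m−1}} dx_m ∏ᵢ P_{nᵢ−1}(xᵢ)`,
defined recursively: `xi [n₁,…,n_m] x = ∫_0^x P_{n₁−1}(y) · xi [n₂,…,n_m] y dy`. -/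
noncomputable def xi : List ℕ → ℝ → ℝ
  | [], _ => 1
  | n :: l, x => ∫ y in (0:ℝ)..x, shiftedLegendre (n - 1) y * xi l y

/-!
Integrating by parts once for each of the first `k - 1` variables moves them onto the `k`-th one:
`ξ(n₁,…,n_m) = ∫₀¹ U(y) P_{n_k-1}(y) ξ(n_{k+1},…,n_m)(y) dy`, where `U(y)` is the iterated
integral over `1 ≥ x₁ ≥ ⋯ ≥ x_{k-1} ≥ y`. Both `U` and `ξ(n_{k+1},…,n_m)` are polynomials, of total
degree at most `N - n_k ≤ n_k - 2` (as `N` is even and `2 n_k > N`), so the integral vanishes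
because `P_{n_k-1}` is orthogonal to all polynomials of lower degree. Orthogonality follows from
the moments `∫₀¹ xʲ Pₙ(x) dx = j(j-1)⋯(j-n+1) / ((j+1)(j+2)⋯(j+n+1))`, which are checked against
the three-term recurrence.
-/

-- Mathlib's `Polynomial.shiftedLegendre n` is `(-1)ⁿ` times the `shiftedLegendre n` used here.
open Polynomial hiding shiftedLegendre
open intervalIntegral

noncomputable def shiftedLegendrePoly : ℕ → ℝ[X]
  | 0 => 1
  | 1 => 2 * X - 1
  | n + 2 => C ((2 * (n + 1) + 1 : ℝ) / (n + 2)) * (2 * X - 1) * shiftedLegendrePoly (n + 1) -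
      C ((n + 1 : ℝ) / (n + 2)) * shiftedLegendrePoly n

theorem eval_shiftedLegendrePoly (n : ℕ) (x : ℝ) :
    (shiftedLegendrePoly n).eval x = shiftedLegendre n x := by
  induction n using shiftedLegendre.induct with
  | case1 => simp [shiftedLegendrePoly, shiftedLegendre]
  | case2 => simp [shiftedLegendrePoly, shiftedLegendre]
  | case3 n ih₁ ih₀ => simp [shiftedLegendrePoly, shiftedLegendre, ih₁, ih₀]

theorem natDegree_shiftedLegendrePoly_le (n : ℕ) : (shiftedLegendrePoly n).natDegree ≤ n := by
  induction n using shiftedLegendre.induct with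
  | case1 => simp [shiftedLegendrePoly]
  | case2 => simp only [shiftedLegendrePoly]; compute_degree!
  | case3 n ih₁ ih₀ =>
    simp only [shiftedLegendrePoly]
    have h₁ : (C ((2 * (n + 1) + 1 : ℝ) / (n + 2)) * (2 * X - 1)).natDegree ≤ 1 := by
      compute_degree!
    have h₀ := (natDegree_C_mul_le ((n + 1 : ℝ) / (n + 2)) _).trans ih₀
    exact (natDegree_sub_le_of_le (natDegree_mul_le_of_le h₁ ih₁) h₀).trans (by omega)

theorem continuous_shiftedLegendre (n : ℕ) : Continuous (shiftedLegendre n) := by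
  simpa only [eval_shiftedLegendrePoly] using (shiftedLegendrePoly n).continuous

noncomputable def legendreMoment (n : ℕ) (s : ℝ) : ℝ :=
  (descPochhammer ℝ n).eval s / (ascPochhammer ℝ (n + 1)).eval (s + 1)

theorem legendreMoment_add_two (n : ℕ) {s : ℝ} (hs : 0 ≤ s) :
    legendreMoment (n + 2) s =
      (2 * (n + 1) + 1) / (n + 2) * (2 * legendreMoment (n + 1) (s + 1) - legendreMoment (n + 1) s)
        - (n + 1) / (n + 2) * legendreMoment n s := by
  simp only [legendreMoment]
  set D := (descPochhammer ℝ n).eval s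
  set A := (ascPochhammer ℝ (n + 1)).eval (s + 1)
  have hA : 0 < A := ascPochhammer_pos _ _ (by linarith)
  have hA₂ : (ascPochhammer ℝ (n + 2)).eval (s + 1) = A * (s + n + 2) := by
    rw [ascPochhammer_succ_eval]; push_cast; ring
  have hA₃ : (ascPochhammer ℝ (n + 3)).eval (s + 1) = A * (s + n + 2) * (s + n + 3) := by
    rw [ascPochhammer_succ_eval, hA₂]; push_cast; ring
  have hB :
      (ascPochhammer ℝ (n + 2)).eval (s + 1 + 1) = A * (s + n + 2) * (s + n + 3) / (s + 1) := by
    rw [eq_div_iff (by positivity), ← hA₃, ascPochhammer_succ_left ℝ (n + 2)]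
    simp only [eval_mul, eval_X, eval_comp, eval_add, eval_one, mul_comm]
  have hD₁ : (descPochhammer ℝ (n + 1)).eval s = D * (s - n) := descPochhammer_succ_eval _ _
  have hD₁' : (descPochhammer ℝ (n + 1)).eval (s + 1) = (s + 1) * D := by
    simp [descPochhammer_succ_left, D]
  have hD₂ : (descPochhammer ℝ (n + 2)).eval s = D * (s - n) * (s - (n + 1)) := by
    rw [descPochhammer_succ_eval, hD₁]; push_cast; ring
  simp only [hA₂, hA₃, hB, hD₁, hD₁', hD₂]
  field_simp
  ring

theorem legendreMoment_natCast_eq_zero {n j : ℕ} (h : j < n) : legendreMoment n j = 0 := by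
  rw [legendreMoment, descPochhammer_eval_eq_descFactorial, Nat.descFactorial_eq_zero_iff_lt.mpr h,
    Nat.cast_zero, zero_div]

theorem intervalIntegrable_pow_mul_shiftedLegendre (j n : ℕ) (a b : ℝ) :
    IntervalIntegrable (fun x => x ^ j * shiftedLegendre n x) MeasureTheory.volume a b :=
  ((continuous_pow j).mul (continuous_shiftedLegendre n)).intervalIntegrable a b

theorem integral_pow_mul_shiftedLegendre (n j : ℕ) :
    ∫ x in (0:ℝ)..1, x ^ j * shiftedLegendre n x = legendreMoment n j := by
  induction n using shiftedLegendre.induct generalizing j with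
  | case1 =>
    simp [shiftedLegendre, legendreMoment, ascPochhammer_one]
  | case2 =>
    have : ∀ x : ℝ, x ^ j * shiftedLegendre 1 x = 2 * x ^ (j + 1) - x ^ j := fun x => by
      simp only [shiftedLegendre]; ring
    simp only [this]
    rw [integral_sub (by simp) (by simp), integral_const_mul, integral_pow, integral_pow]
    simp only [legendreMoment, descPochhammer_one, ascPochhammer_succ_eval, ascPochhammer_one,
      eval_X]
    push_cast
    field_simp
    ring
  | case3 n ih₁ ih₀ =>
    have hsplit : ∀ x : ℝ, x ^ j * shiftedLegendre (n + 2) x =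
        (2 * (n + 1) + 1) / (n + 2) * 2 * (x ^ (j + 1) * shiftedLegendre (n + 1) x)
          - (2 * (n + 1) + 1) / (n + 2) * (x ^ j * shiftedLegendre (n + 1) x)
          - (n + 1) / (n + 2) * (x ^ j * shiftedLegendre n x) := fun x => by
      simp only [shiftedLegendre]; ring
    have hI := intervalIntegrable_pow_mul_shiftedLegendre
    simp only [hsplit]
    rw [integral_sub (((hI _ _ _ _).const_mul _).sub ((hI _ _ _ _).const_mul _))
      ((hI _ _ _ _).const_mul _), integral_sub ((hI _ _ _ _).const_mul _) ((hI _ _ _ _).const_mul _),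
      integral_const_mul, integral_const_mul, integral_const_mul, ih₁, ih₁, ih₀,
      legendreMoment_add_two n (Nat.cast_nonneg j)]
    push_cast
    ring

theorem integral_shiftedLegendre_mul_eq_zero {n : ℕ} {q : ℝ[X]} (hq : q.natDegree < n) :
    ∫ x in (0:ℝ)..1, shiftedLegendre n x * q.eval x = 0 := by
  have hexpand : ∀ x, shiftedLegendre n x * q.eval x =
      ∑ i ∈ Finset.range (q.natDegree + 1), q.coeff i * (x ^ i * shiftedLegendre n x) := by
    intro x
    rw [eval_eq_sum_range, Finset.mul_sum]
    exact Finset.sum_congr rfl fun i _ => by ring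
  simp only [hexpand]
  rw [integral_finsetSum fun i _ =>
    (intervalIntegrable_pow_mul_shiftedLegendre i n 0 1).const_mul (q.coeff i)]
  refine Finset.sum_eq_zero fun i hi => ?_
  have hin : i < n := by rw [Finset.mem_range] at hi; omega
  rw [integral_const_mul, integral_pow_mul_shiftedLegendre, legendreMoment_natCast_eq_zero hin,
    mul_zero]

theorem Polynomial.exists_derivative_eq {K : Type*} [Field K] [CharZero K] (p : K[X]) :
    ∃ q : K[X], q.natDegree ≤ p.natDegree + 1 ∧ derivative q = p := by
  refine ⟨∑ i ∈ Finset.range (p.natDegree + 1), C (p.coeff i / (i + 1)) * X ^ (i + 1), ?_, ?_⟩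
  · refine natDegree_sum_le_of_forall_le _ _ fun i hi => ?_
    rw [Finset.mem_range] at hi
    exact (natDegree_C_mul_X_pow_le _ _).trans (by omega)
  · conv_rhs => rw [p.as_sum_range_C_mul_X_pow]
    refine (derivative_sum).trans (Finset.sum_congr rfl fun i _ => ?_)
    rw [derivative_C_mul_X_pow, Nat.add_sub_cancel, Nat.cast_succ,
      div_mul_cancel₀ _ (Nat.cast_add_one_ne_zero i)]

theorem continuous_xi (l : List ℕ) : Continuous (xi l) := by
  induction l with
  | nil => exact continuous_const
  | cons n l ih =>
    exact continuous_iff_continuousAt.2 fun x =>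
      (((continuous_shiftedLegendre _).mul ih).integral_hasStrictDerivAt 0 x).hasDerivAt.continuousAt

theorem hasDerivAt_xi_cons (n : ℕ) (l : List ℕ) (x : ℝ) :
    HasDerivAt (xi (n :: l)) (shiftedLegendre (n - 1) x * xi l x) x :=
  (((continuous_shiftedLegendre _).mul (continuous_xi l)).integral_hasStrictDerivAt 0 x).hasDerivAt

theorem exists_eval_eq_xi {l : List ℕ} (hl : ∀ n ∈ l, 0 < n) :
    ∃ p : ℝ[X], p.natDegree ≤ l.sum ∧ ∀ x, p.eval x = xi l x := by
  induction l with
  | nil => exact ⟨1, by simp, fun x => by simp [xi]⟩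
  | cons n l ih =>
    obtain ⟨g, hg, hgxi⟩ := ih fun m hm => hl m (List.mem_cons_of_mem n hm)
    obtain ⟨Q, hQ, hQ'⟩ := exists_derivative_eq (shiftedLegendrePoly (n - 1) * g)
    have hn := hl n List.mem_cons_self
    refine ⟨Q - C (Q.eval 0), ?_, fun x => ?_⟩
    · rw [natDegree_sub_C, List.sum_cons]
      have := natDegree_mul_le_of_le (natDegree_shiftedLegendrePoly_le (n - 1)) hg
      omega
    · have hxi : xi (n :: l) x = ∫ y in (0:ℝ)..x, (derivative Q).eval y := by
        simp only [xi, hQ', eval_mul, eval_shiftedLegendrePoly, hgxi]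
      rw [hxi, integral_eq_sub_of_hasDerivAt (fun y _ => Q.hasDerivAt y)
        ((derivative Q).continuous.intervalIntegrable _ _), eval_sub, eval_C]

theorem integral_derivative_mul_xi_cons (A : ℝ[X]) (n : ℕ) (l : List ℕ) :
    ∫ x in (0:ℝ)..1, (derivative A).eval x * xi (n :: l) x =
      ∫ x in (0:ℝ)..1, (A.eval 1 - A.eval x) * (shiftedLegendre (n - 1) x * xi l x) := by
  have hu' : Continuous fun x => shiftedLegendre (n - 1) x * xi l x :=
    (continuous_shiftedLegendre _).mul (continuous_xi l)
  have hibp := integral_mul_deriv_eq_deriv_mul (a := 0) (b := 1)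
    (fun x _ => hasDerivAt_xi_cons n l x) (fun x _ => (A.hasDerivAt x).sub_const (A.eval 1))
    (hu'.intervalIntegrable 0 1) ((derivative A).continuous.intervalIntegrable 0 1)
  have hxi₀ : xi (n :: l) 0 = 0 := integral_same
  simp only [sub_self, mul_zero, hxi₀, zero_mul, zero_sub] at hibp
  calc ∫ x in (0:ℝ)..1, (derivative A).eval x * xi (n :: l) x
      = ∫ x in (0:ℝ)..1, xi (n :: l) x * (derivative A).eval x := by simp only [mul_comm]
    _ = -∫ x in (0:ℝ)..1, shiftedLegendre (n - 1) x * xi l x * (A.eval x - A.eval 1) := hibp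
    _ = _ := by
      rw [← integral_neg]
      congr 1 with x
      ring

theorem exists_xi_append_cons_eq_integral {t : List ℕ} (ht : ∀ m ∈ t, 0 < m) :
    ∃ U : ℝ[X], U.natDegree ≤ t.sum ∧ ∀ n l, xi (t ++ n :: l) 1 =
      ∫ x in (0:ℝ)..1, U.eval x * (shiftedLegendre (n - 1) x * xi l x) := by
  induction t using List.reverseRecOn with
  | nil => exact ⟨1, by simp, fun n l => by simp [xi]⟩
  | append_singleton s m ih =>
    obtain ⟨U, hU, hxi⟩ := ih fun k hk => ht k (List.mem_append_left _ hk)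
    obtain ⟨A, hA, hA'⟩ := exists_derivative_eq (U * shiftedLegendrePoly (m - 1))
    have hm := ht m (by simp)
    refine ⟨C (A.eval 1) - A, ?_, fun n l => ?_⟩
    · have := natDegree_mul_le_of_le hU (natDegree_shiftedLegendrePoly_le (m - 1))
      rw [List.sum_append, List.sum_singleton]
      exact (natDegree_sub_le_of_le (natDegree_C _).le hA).trans (by omega)
    · rw [List.append_assoc, List.singleton_append, hxi m (n :: l)]
      calc ∫ x in (0:ℝ)..1, U.eval x * (shiftedLegendre (m - 1) x * xi (n :: l) x)
          = ∫ x in (0:ℝ)..1, (derivative A).eval x * xi (n :: l) x := by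
            simp only [hA', eval_mul, eval_shiftedLegendrePoly, mul_assoc]
        _ = _ := integral_derivative_mul_xi_cons A n l
        _ = _ := by simp only [eval_sub, eval_C]

theorem xi_eq_zero_of_index_gt_half_general (N : ℕ) (hNeven : Even N)
    (l : List ℕ) (hpos : ∀ n ∈ l, 0 < n) (hsum : l.sum ≤ N)
    (hk : ∃ k : Fin l.length, N < 2 * l.get k) :
    xi l 1 = 0 := by
  obtain ⟨n, hnl, hn⟩ : ∃ n ∈ l, N < 2 * n :=
    let ⟨k, hk⟩ := hk
    ⟨l.get k, l.get_mem k, hk⟩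
  obtain ⟨t, b, rfl⟩ := List.append_of_mem hnl
  obtain ⟨U, hU, hxi⟩ :=
    exists_xi_append_cons_eq_integral (t := t) fun m hm => hpos m (by simp [hm])
  obtain ⟨g, hg, hgxi⟩ := exists_eval_eq_xi (l := b) fun m hm => hpos m (by simp [hm])
  have hdeg : (U * g).natDegree < n - 1 := by
    rw [List.sum_append, List.sum_cons] at hsum
    obtain ⟨r, rfl⟩ := hNeven
    exact (natDegree_mul_le_of_le hU hg).trans_lt (by omega)
  calc xi (t ++ n :: b) 1
      = ∫ x in (0:ℝ)..1, shiftedLegendre (n - 1) x * (U * g).eval x := by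
        rw [hxi]
        congr 1 with x
        rw [eval_mul, hgxi]
        ring
    _ = 0 := integral_shiftedLegendre_mul_eq_zero hdeg

/-- If `N` is an even positive integer, `n₁ + ⋯ + n_m ≤ N` (the `nᵢ` positive, `m ≥ 1`),
and `2 n_k > N` for some index `k`, then `ξ(n₁,…,n_m) = 0`. Consequently, in the
`N`-th order truncation of the Magnus expansion only the Legendre coefficients
`A_1, …, A_{N/2}` can occur. -/
theorem xi_eq_zero_of_index_gt_half (N : ℕ) (hNeven : Even N) (hNpos : 0 < N)
    (l : List ℕ) (hl : l ≠ []) (hpos : ∀ n ∈ l, 0 < n) (hsum : l.sum ≤ N)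
    (hk : ∃ k : Fin l.length, N < 2 * l.get k) :
    xi l 1 = 0 :=
  xi_eq_zero_of_index_gt_half_general N hNeven l hpos hsum hk
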